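/- Let 1 < α < 2 and β > 0, let φ be an analytic self-map of the open unit disk D, and let g be analytic on D. Then the operator U_gC_φ, defined by (U_gC_φ f)(z) = ∫₀^z f(φ(ξ)) g'(ξ) dξ, is bounded from Z^α to Z^β if and only if g'' ∈ H_{v_β}^∞ and sup_{z∈D} (1−|z|²)^β |g'(z)φ'(z)| / (1−|φ(z)|²)^{α−1} < ∞. -/

import Mathlib

noncomputable section

/-- The open unit disk in the complex plane. -/
def uD : Set ℂ := Metric.ball 0 1

/-- The Zygmund-type quantity `(1-|z|^2)^a * |f''(z)|`. -/
def zygS (a : ℝ) (f : ℂ → ℂ) (z : ℂ) : ℝ := (1 - ‖z‖ ^ 2) ^ a * ‖deriv (deriv f) z‖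

/-- Membership in the Zygmund-type space `Z^a`. -/
def memZ (a : ℝ) (f : ℂ → ℂ) : Prop :=
  AnalyticOn ℂ f uD ∧ ∃ M : ℝ, ∀ z ∈ uD, zygS a f z ≤ M

/-- The Zygmund-type norm `‖f‖_{Z^a} = |f 0| + |f' 0| + sup_{z ∈ D} (1-|z|^2)^a |f''(z)|`. -/
def zNorm (a : ℝ) (f : ℂ → ℂ) : ℝ := ‖f 0‖ + ‖deriv f 0‖ + sSup (zygS a f '' uD)

/-- Membership in the weighted space `H^∞_{v_b}` (for `u` analytic on `uD`). -/
def memHv (b : ℝ) (u : ℂ → ℂ) : Prop :=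
  ∃ M : ℝ, ∀ z ∈ uD, (1 - ‖z‖ ^ 2) ^ b * ‖u z‖ ≤ M

/-- `T` is a bounded operator from `Z^a` to `Z^b`. -/
def boundedOp (a b : ℝ) (T : (ℂ → ℂ) → ℂ → ℂ) : Prop :=
  (∀ f, memZ a f → memZ b (T f)) ∧
    ∃ C > 0, ∀ f, memZ a f → zNorm b (T f) ≤ C * zNorm a f

/-- `(U_g C_φ f)(z) = ∫₀^z f(φ(ξ)) g'(ξ) dξ`, parametrized along the segment from `0` to `z`. -/
def UgCphi (g φ : ℂ → ℂ) (f : ℂ → ℂ) : ℂ → ℂ :=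
  fun z => ∫ t in (0:ℝ)..1, z * (f (φ ((t : ℂ) * z)) * deriv g ((t : ℂ) * z))


/-!
Integrating `f''` twice along rays from the origin shows that every `f ∈ Z^α` with `1 < α < 2`
satisfies `|f'(z)| ≲ ‖f‖ (1 - |z|)^(1-α)` and `|f(z)| ≲ ‖f‖`. As
`(U_g C_φ f)'' = f'(φ) φ' g' + f(φ) g''` and `(1 - |w|)^(1-α) ≤ 2 (1 - |w|²)^(1-α)`, the two
conditions imply boundedness.

Conversely, applying the operator to `1` and to `z` bounds `(1 - |z|²)^β |g''(z)|` and
`(1 - |z|²)^β |g'(z) φ'(z)|`. The test functions `f_w(z) = (1 - w̄ z)^(2-α)` are bounded in `Z^α`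
uniformly in `w` and satisfy `|f_w'(w)| = (2-α) |w| (1 - |w|²)^(1-α)`; taking `w = φ(z)` gives the
weighted bound where `|φ(z)| > 1/2`, and the bound on `g' φ'` covers `|φ(z)| ≤ 1/2`.
-/

open Set Filter Topology

lemma isOpen_uD : IsOpen uD := Metric.isOpen_ball

lemma mem_uD_iff {z : ℂ} : z ∈ uD ↔ ‖z‖ < 1 := mem_ball_zero_iff

lemma zero_mem_uD : (0 : ℂ) ∈ uD := Metric.mem_ball_self one_pos

lemma starConvex_uD : StarConvex ℝ 0 uD := (convex_ball (0 : ℂ) 1).starConvex zero_mem_uD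

lemma one_sub_sq_norm_pos {z : ℂ} (hz : z ∈ uD) : 0 < 1 - ‖z‖ ^ 2 := by
  nlinarith [mem_uD_iff.1 hz, norm_nonneg z]

lemma weight_nonneg {b : ℝ} {z : ℂ} (hz : z ∈ uD) : 0 ≤ (1 - ‖z‖ ^ 2) ^ b :=
  Real.rpow_nonneg (one_sub_sq_norm_pos hz).le b

lemma weight_mul_norm_nonneg {b : ℝ} {z : ℂ} (hz : z ∈ uD) (x : ℂ) :
    0 ≤ (1 - ‖z‖ ^ 2) ^ b * ‖x‖ :=
  mul_nonneg (weight_nonneg hz) (norm_nonneg x)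

lemma norm_ofReal_mul {t : ℝ} (ht : 0 ≤ t) (z : ℂ) : ‖(t : ℂ) * z‖ = t * ‖z‖ := by
  rw [norm_mul, Complex.norm_real, Real.norm_of_nonneg ht]

lemma ofReal_mul_mem {s : Set ℂ} (hs : StarConvex ℝ 0 s) {z : ℂ} (hz : z ∈ s) {t : ℝ}
    (ht : t ∈ Icc (0 : ℝ) 1) : (t : ℂ) * z ∈ s := by
  simpa [Complex.real_smul] using hs.smul_mem hz ht.1 ht.2

lemma analyticOn_uD_iff {f : ℂ → ℂ} : AnalyticOn ℂ f uD ↔ DifferentiableOn ℂ f uD :=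
  Complex.analyticOn_iff_differentiableOn isOpen_uD

lemma hasDerivAt_of_mem_uD {f : ℂ → ℂ} (hf : DifferentiableOn ℂ f uD) {z : ℂ} (hz : z ∈ uD) :
    HasDerivAt f (deriv f z) z :=
  (hf.differentiableAt (isOpen_uD.mem_nhds hz)).hasDerivAt

lemma sub_eq_integral_ray {s : Set ℂ} (hs : StarConvex ℝ 0 s) {F F' : ℂ → ℂ}
    (hF : ∀ w ∈ s, HasDerivAt F (F' w) w) (hF' : ContinuousOn F' s) {z : ℂ} (hz : z ∈ s) :
    F z - F 0 = ∫ t in (0 : ℝ)..1, z * F' (t * z) := by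
  have hray : ∀ t ∈ uIcc (0 : ℝ) 1,
      HasDerivAt (fun t : ℝ => F (t * z)) (z * F' (t * z)) t := by
    intro t ht
    rw [uIcc_of_le zero_le_one] at ht
    have hline : HasDerivAt (fun t : ℝ => (t : ℂ) * z) z t := by
      simpa using ((hasDerivAt_id (t : ℂ)).mul_const z).comp_ofReal
    simpa [Function.comp_def, mul_comm] using (hF _ (ofReal_mul_mem hs hz ht)).comp t hline
  have hcont : ContinuousOn (fun t : ℝ => z * F' (t * z)) (Icc 0 1) :=
    continuousOn_const.mul
      (hF'.comp (by fun_prop) fun t ht => ofReal_mul_mem hs hz ht)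
  rw [intervalIntegral.integral_eq_sub_of_hasDerivAt hray
    (hcont.intervalIntegrable_of_Icc zero_le_one)]
  simp

-- By Morera, `h` has a primitive `F` on the disk, and the ray integral equals `F w - F 0`.
lemma hasDerivAt_integral_ray {h : ℂ → ℂ} (hh : DifferentiableOn ℂ h uD) {z : ℂ} (hz : z ∈ uD) :
    HasDerivAt (fun w => ∫ t in (0 : ℝ)..1, w * h (t * w)) (h z) z := by
  obtain ⟨F, hF⟩ := DifferentiableOn.isExactOn_ball (c := 0) (r := 1) hh
  have hprim : (fun w => ∫ t in (0 : ℝ)..1, w * h (t * w)) =ᶠ[𝓝 z] fun w => F w - F 0 :=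
    eventually_of_mem (isOpen_uD.mem_nhds hz) fun w hw =>
      (sub_eq_integral_ray starConvex_uD hF hh.continuousOn hw).symm
  exact ((hF z hz).sub_const (F 0)).congr_of_eventuallyEq hprim

section Operator

variable {φ g f : ℂ → ℂ}

lemma hasDerivAt_UgCphi (hφ : DifferentiableOn ℂ φ uD) (hφm : MapsTo φ uD uD)
    (hg : DifferentiableOn ℂ g uD) (hf : DifferentiableOn ℂ f uD) {z : ℂ} (hz : z ∈ uD) :
    HasDerivAt (UgCphi g φ f) (f (φ z) * deriv g z) z :=
  hasDerivAt_integral_ray (h := fun ξ => f (φ ξ) * deriv g ξ)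
    ((hf.comp hφ hφm).mul (hg.deriv isOpen_uD)) hz

lemma UgCphi_zero : UgCphi g φ f 0 = 0 := by simp [UgCphi]

lemma deriv_deriv_UgCphi (hφ : DifferentiableOn ℂ φ uD) (hφm : MapsTo φ uD uD)
    (hg : DifferentiableOn ℂ g uD) (hf : DifferentiableOn ℂ f uD) {z : ℂ} (hz : z ∈ uD) :
    deriv (deriv (UgCphi g φ f)) z
      = deriv f (φ z) * deriv φ z * deriv g z + f (φ z) * deriv (deriv g) z := by
  have hT : deriv (UgCphi g φ f) =ᶠ[𝓝 z] fun w => f (φ w) * deriv g w :=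
    eventually_of_mem (isOpen_uD.mem_nhds hz) fun w hw =>
      (hasDerivAt_UgCphi hφ hφm hg hf hw).deriv
  have hfφ : HasDerivAt (fun w => f (φ w)) (deriv f (φ z) * deriv φ z) z :=
    (hasDerivAt_of_mem_uD hf (hφm hz)).comp z (hasDerivAt_of_mem_uD hφ hz)
  rw [hT.deriv_eq]
  exact (hfφ.mul (hasDerivAt_of_mem_uD (hg.deriv isOpen_uD) hz)).deriv

lemma zygS_UgCphi (hφ : DifferentiableOn ℂ φ uD) (hφm : MapsTo φ uD uD)
    (hg : DifferentiableOn ℂ g uD) (hf : DifferentiableOn ℂ f uD) {b : ℝ} {z : ℂ} (hz : z ∈ uD) :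
    zygS b (UgCphi g φ f) z = (1 - ‖z‖ ^ 2) ^ b *
      ‖deriv f (φ z) * deriv φ z * deriv g z + f (φ z) * deriv (deriv g) z‖ := by
  rw [zygS, deriv_deriv_UgCphi hφ hφm hg hf hz]

end Operator

lemma integral_mul_one_sub_mul_rpow {r p : ℝ} (hr0 : 0 ≤ r) (hr1 : r < 1) (hp : p ≠ 1) :
    ∫ t in (0 : ℝ)..1, r * (1 - t * r) ^ (-p) = ((1 - r) ^ (1 - p) - 1) / (p - 1) := by
  have hbase : ∀ t ∈ uIcc (0 : ℝ) 1, 0 < 1 - t * r := fun t ht => by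
    rw [uIcc_of_le zero_le_one] at ht
    nlinarith [ht.1, ht.2]
  have hprim : ∀ t ∈ uIcc (0 : ℝ) 1,
      HasDerivAt (fun s => (1 - s * r) ^ (1 - p) / (p - 1)) (r * (1 - t * r) ^ (-p)) t := by
    intro t ht
    have hlin : HasDerivAt (fun s : ℝ => 1 - s * r) (-r) t := by
      simpa using ((hasDerivAt_id t).mul_const r).const_sub 1
    refine (((Real.hasDerivAt_rpow_const (p := 1 - p) (Or.inl (hbase t ht).ne')).comp t
      hlin).div_const (p - 1)).congr_deriv ?_
    rw [show 1 - p - 1 = -p by ring]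
    field_simp [sub_ne_zero.2 hp]
    ring
  have hint : IntervalIntegrable (fun t => r * (1 - t * r) ^ (-p)) MeasureTheory.volume 0 1 :=
    (continuousOn_const.mul ((continuousOn_const.sub
      (continuousOn_id.mul continuousOn_const)).rpow_const
        fun t ht => Or.inl (hbase t ht).ne')).intervalIntegrable
  rw [intervalIntegral.integral_eq_sub_of_hasDerivAt hprim hint]
  norm_num
  ring

lemma norm_sub_le_of_norm_deriv_le_rpow {u : ℂ → ℂ} (hu : DifferentiableOn ℂ u uD) {p S : ℝ}
    (hp : p ≠ 1) (hS : ∀ z ∈ uD, ‖deriv u z‖ ≤ S * (1 - ‖z‖) ^ (-p)) {ζ : ℂ} (hζ : ζ ∈ uD) :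
    ‖u ζ - u 0‖ ≤ S * (((1 - ‖ζ‖) ^ (1 - p) - 1) / (p - 1)) := by
  have hr1 : ‖ζ‖ < 1 := mem_uD_iff.1 hζ
  rw [sub_eq_integral_ray starConvex_uD (fun w hw => hasDerivAt_of_mem_uD hu hw)
      (hu.deriv isOpen_uD).continuousOn hζ,
    ← integral_mul_one_sub_mul_rpow (norm_nonneg ζ) hr1 hp, ← intervalIntegral.integral_const_mul]
  refine intervalIntegral.norm_integral_le_of_norm_le zero_le_one
    (MeasureTheory.ae_of_all _ fun t ht => ?_) ?_
  · have ht' : t ∈ Icc (0 : ℝ) 1 := Ioc_subset_Icc_self ht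
    have hbound := hS _ (ofReal_mul_mem starConvex_uD hζ ht')
    rw [norm_ofReal_mul ht'.1] at hbound
    rw [norm_mul]
    calc ‖ζ‖ * ‖deriv u (t * ζ)‖ ≤ ‖ζ‖ * (S * (1 - t * ‖ζ‖) ^ (-p)) :=
          mul_le_mul_of_nonneg_left hbound (norm_nonneg ζ)
      _ = S * (‖ζ‖ * (1 - t * ‖ζ‖) ^ (-p)) := by ring
  · refine (continuousOn_const.mul (continuousOn_const.mul
      ((continuousOn_const.sub (continuousOn_id.mul continuousOn_const)).rpow_const
        fun t ht => Or.inl ?_))).intervalIntegrable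
    rw [uIcc_of_le zero_le_one] at ht
    simp only [Pi.sub_apply, Pi.mul_apply, id]
    nlinarith [ht.1, ht.2, norm_nonneg ζ]

lemma le_mul_one_sub_norm_rpow_neg {a S x : ℝ} (ha : 0 ≤ a) (hx : 0 ≤ x) {z : ℂ} (hz : z ∈ uD)
    (h : (1 - ‖z‖ ^ 2) ^ a * x ≤ S) : x ≤ S * (1 - ‖z‖) ^ (-a) := by
  have hpos : 0 < 1 - ‖z‖ := by linarith [mem_uD_iff.1 hz]
  have hle : 1 - ‖z‖ ≤ 1 - ‖z‖ ^ 2 := by nlinarith [mem_uD_iff.1 hz, norm_nonneg z]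
  rw [Real.rpow_neg hpos.le, ← div_eq_mul_inv, le_div_iff₀ (Real.rpow_pos_of_pos hpos a)]
  calc x * (1 - ‖z‖) ^ a ≤ (1 - ‖z‖ ^ 2) ^ a * x := by
        rw [mul_comm]; gcongr
    _ ≤ S := h

section ZygmundNorm

variable {a : ℝ} {f : ℂ → ℂ}

lemma zygS_nonneg {z : ℂ} (hz : z ∈ uD) : 0 ≤ zygS a f z := weight_mul_norm_nonneg hz _

lemma memZ.zygS_le_sSup (hf : memZ a f) {z : ℂ} (hz : z ∈ uD) :
    zygS a f z ≤ sSup (zygS a f '' uD) := by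
  obtain ⟨M, hM⟩ := hf.2
  exact le_csSup ⟨M, forall_mem_image.2 hM⟩ (mem_image_of_mem _ hz)

lemma memZ.sSup_zygS_nonneg (hf : memZ a f) : 0 ≤ sSup (zygS a f '' uD) :=
  (zygS_nonneg zero_mem_uD).trans (hf.zygS_le_sSup zero_mem_uD)

lemma memZ.norm_apply_zero_le_zNorm (hf : memZ a f) : ‖f 0‖ ≤ zNorm a f := by
  have := hf.sSup_zygS_nonneg
  unfold zNorm
  linarith [norm_nonneg (deriv f 0)]

lemma memZ.norm_deriv_zero_le_zNorm (hf : memZ a f) : ‖deriv f 0‖ ≤ zNorm a f := by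
  have := hf.sSup_zygS_nonneg
  unfold zNorm
  linarith [norm_nonneg (f 0)]

lemma sSup_zygS_le_zNorm : sSup (zygS a f '' uD) ≤ zNorm a f := by
  unfold zNorm
  linarith [norm_nonneg (f 0), norm_nonneg (deriv f 0)]

lemma memZ.zNorm_nonneg (hf : memZ a f) : 0 ≤ zNorm a f :=
  (norm_nonneg _).trans hf.norm_apply_zero_le_zNorm

lemma memZ.zygS_le_zNorm (hf : memZ a f) {z : ℂ} (hz : z ∈ uD) : zygS a f z ≤ zNorm a f :=
  (hf.zygS_le_sSup hz).trans sSup_zygS_le_zNorm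

lemma zNorm_le_of_zygS_le {M : ℝ} (hM0 : 0 ≤ M) (hM : ∀ z ∈ uD, zygS a f z ≤ M) :
    zNorm a f ≤ ‖f 0‖ + ‖deriv f 0‖ + M := by
  unfold zNorm
  gcongr
  exact Real.sSup_le (forall_mem_image.2 hM) hM0

end ZygmundNorm

lemma one_sub_rpow_mul_one_sub_sq_rpow_le_two {α ρ : ℝ} (hα1 : 1 < α) (hα2 : α ≤ 2)
    (hρ0 : 0 ≤ ρ) (hρ1 : ρ < 1) : (1 - ρ) ^ (1 - α) * (1 - ρ ^ 2) ^ (α - 1) ≤ 2 := by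
  have hpos : 0 < 1 - ρ := by linarith
  rw [show 1 - ρ ^ 2 = (1 - ρ) * (1 + ρ) by ring, Real.mul_rpow hpos.le (by linarith),
    ← mul_assoc, ← Real.rpow_add hpos, show 1 - α + (α - 1) = 0 by ring, Real.rpow_zero, one_mul]
  calc (1 + ρ) ^ (α - 1) ≤ 2 ^ (α - 1) := by gcongr; linarith
    _ ≤ 2 ^ (1 : ℝ) := Real.rpow_le_rpow_of_exponent_le one_le_two (by linarith)
    _ = 2 := Real.rpow_one 2

section Growth

variable {α : ℝ} {f : ℂ → ℂ}

lemma memZ.norm_deriv_le (hα : 1 < α) (hf : memZ α f) {ζ : ℂ} (hζ : ζ ∈ uD) :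
    ‖deriv f ζ‖ ≤ α / (α - 1) * zNorm α f * (1 - ‖ζ‖) ^ (1 - α) := by
  have hfd : DifferentiableOn ℂ f uD := analyticOn_uD_iff.1 hf.1
  set S := sSup (zygS α f '' uD)
  set N := zNorm α f
  have hpos : 0 < 1 - ‖ζ‖ := by linarith [mem_uD_iff.1 hζ]
  have hone : 1 ≤ (1 - ‖ζ‖) ^ (1 - α) :=
    Real.one_le_rpow_of_pos_of_le_one_of_nonpos hpos (by linarith [norm_nonneg ζ]) (by linarith)
  have hdiff := norm_sub_le_of_norm_deriv_le_rpow (hfd.deriv isOpen_uD) hα.ne'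
    (fun z hz => le_mul_one_sub_norm_rpow_neg (by linarith) (norm_nonneg _) hz
      (hf.zygS_le_sSup hz)) hζ
  have hSN : S ≤ N := sSup_zygS_le_zNorm
  have hf'N : ‖deriv f 0‖ ≤ N := hf.norm_deriv_zero_le_zNorm
  have hS0 : 0 ≤ S := hf.sSup_zygS_nonneg
  have hα1 : 0 < α - 1 := by linarith
  calc ‖deriv f ζ‖ ≤ ‖deriv f 0‖ + ‖deriv f ζ - deriv f 0‖ := norm_le_insert' _ _
    _ ≤ N * (1 - ‖ζ‖) ^ (1 - α) + N / (α - 1) * (1 - ‖ζ‖) ^ (1 - α) := by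
        gcongr ?_ + ?_
        · nlinarith
        · refine hdiff.trans ?_
          rw [mul_div_assoc', div_mul_eq_mul_div]
          gcongr <;> linarith
    _ = α / (α - 1) * N * (1 - ‖ζ‖) ^ (1 - α) := by field_simp; ring

lemma memZ.norm_le (hα1 : 1 < α) (hα2 : α < 2) (hf : memZ α f) {ζ : ℂ} (hζ : ζ ∈ uD) :
    ‖f ζ‖ ≤ (1 + α / ((α - 1) * (2 - α))) * zNorm α f := by
  have hfd : DifferentiableOn ℂ f uD := analyticOn_uD_iff.1 hf.1
  set N := zNorm α f
  have hN : 0 ≤ N := hf.zNorm_nonneg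
  have hdiff := norm_sub_le_of_norm_deriv_le_rpow hfd (p := α - 1) (by linarith)
    (fun z hz => by simpa using hf.norm_deriv_le hα1 hz) hζ
  have hpow : 0 ≤ (1 - ‖ζ‖) ^ (1 - (α - 1)) :=
    Real.rpow_nonneg (by linarith [mem_uD_iff.1 hζ]) _
  have hα1' : 0 < α - 1 := by linarith
  have hα2' : 0 < 2 - α := by linarith
  calc ‖f ζ‖ ≤ ‖f 0‖ + ‖f ζ - f 0‖ := norm_le_insert' _ _
    _ ≤ N + α / (α - 1) * N * (1 / (2 - α)) := by
        gcongr ?_ + ?_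
        · exact hf.norm_apply_zero_le_zNorm
        · refine hdiff.trans (mul_le_mul_of_nonneg_left ?_ (by positivity))
          rw [show α - 1 - 1 = -(2 - α) by ring, div_neg, ← neg_div, neg_sub]
          exact div_le_div_of_nonneg_right (by linarith) hα2'.le
    _ = (1 + α / ((α - 1) * (2 - α))) * N := by field_simp

lemma memZ.norm_deriv_mul_weight_le (hα1 : 1 < α) (hα2 : α ≤ 2) (hf : memZ α f) {w : ℂ}
    (hw : w ∈ uD) : ‖deriv f w‖ * (1 - ‖w‖ ^ 2) ^ (α - 1) ≤ 2 * (α / (α - 1)) * zNorm α f := by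
  have hc : 0 ≤ α / (α - 1) * zNorm α f :=
    mul_nonneg (div_nonneg (by linarith) (by linarith)) hf.zNorm_nonneg
  calc ‖deriv f w‖ * (1 - ‖w‖ ^ 2) ^ (α - 1)
      ≤ α / (α - 1) * zNorm α f * (1 - ‖w‖) ^ (1 - α) * (1 - ‖w‖ ^ 2) ^ (α - 1) :=
        mul_le_mul_of_nonneg_right (hf.norm_deriv_le hα1 hw) (weight_nonneg hw)
    _ = α / (α - 1) * zNorm α f * ((1 - ‖w‖) ^ (1 - α) * (1 - ‖w‖ ^ 2) ^ (α - 1)) := by ring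
    _ ≤ α / (α - 1) * zNorm α f * 2 := by
        gcongr
        exact one_sub_rpow_mul_one_sub_sq_rpow_le_two hα1 hα2 (norm_nonneg w) (mem_uD_iff.1 hw)
    _ = 2 * (α / (α - 1)) * zNorm α f := by ring

end Growth

section Sufficiency

variable {α β : ℝ} {φ g : ℂ → ℂ}

lemma zygS_UgCphi_le (hα1 : 1 < α) (hα2 : α < 2) (hφ : DifferentiableOn ℂ φ uD)
    (hφm : MapsTo φ uD uD) (hg : DifferentiableOn ℂ g uD) {M₁ M₂ : ℝ} (hM₂0 : 0 ≤ M₂)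
    (hM₁ : ∀ z ∈ uD, (1 - ‖z‖ ^ 2) ^ β * ‖deriv (deriv g) z‖ ≤ M₁)
    (hM₂ : ∀ z ∈ uD,
      (1 - ‖z‖ ^ 2) ^ β * ‖deriv g z * deriv φ z‖ / (1 - ‖φ z‖ ^ 2) ^ (α - 1) ≤ M₂)
    {f : ℂ → ℂ} (hf : memZ α f) {z : ℂ} (hz : z ∈ uD) :
    zygS β (UgCphi g φ f) z
      ≤ (2 * (α / (α - 1)) * M₂ + (1 + α / ((α - 1) * (2 - α))) * M₁) * zNorm α f := by
  set N := zNorm α f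
  set A := (1 - ‖z‖ ^ 2) ^ β
  have hA : 0 ≤ A := weight_nonneg hz
  have hN : 0 ≤ N := hf.zNorm_nonneg
  have hw : φ z ∈ uD := hφm hz
  have hc₂ : 0 ≤ 1 + α / ((α - 1) * (2 - α)) :=
    add_nonneg zero_le_one (div_nonneg (by linarith) (mul_nonneg (by linarith) (by linarith)))
  have hgφ : A * ‖deriv g z * deriv φ z‖ ≤ M₂ * (1 - ‖φ z‖ ^ 2) ^ (α - 1) :=
    (div_le_iff₀ (Real.rpow_pos_of_pos (one_sub_sq_norm_pos hw) _)).1 (hM₂ z hz)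
  have hfirst : A * ‖deriv f (φ z) * deriv φ z * deriv g z‖ ≤ 2 * (α / (α - 1)) * M₂ * N :=
    calc A * ‖deriv f (φ z) * deriv φ z * deriv g z‖
        = ‖deriv f (φ z)‖ * (A * ‖deriv g z * deriv φ z‖) := by
          simp only [norm_mul]; ring
      _ ≤ ‖deriv f (φ z)‖ * (M₂ * (1 - ‖φ z‖ ^ 2) ^ (α - 1)) :=
          mul_le_mul_of_nonneg_left hgφ (norm_nonneg _)
      _ = M₂ * (‖deriv f (φ z)‖ * (1 - ‖φ z‖ ^ 2) ^ (α - 1)) := by ring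
      _ ≤ M₂ * (2 * (α / (α - 1)) * N) :=
          mul_le_mul_of_nonneg_left (hf.norm_deriv_mul_weight_le hα1 hα2.le hw) hM₂0
      _ = 2 * (α / (α - 1)) * M₂ * N := by ring
  have hsecond : A * ‖f (φ z) * deriv (deriv g) z‖
      ≤ (1 + α / ((α - 1) * (2 - α))) * M₁ * N :=
    calc A * ‖f (φ z) * deriv (deriv g) z‖ = ‖f (φ z)‖ * (A * ‖deriv (deriv g) z‖) := by
          rw [norm_mul]; ring
      _ ≤ (1 + α / ((α - 1) * (2 - α))) * N * M₁ :=
          mul_le_mul (hf.norm_le hα1 hα2 hw) (hM₁ z hz) (by positivity) (by positivity)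
      _ = (1 + α / ((α - 1) * (2 - α))) * M₁ * N := by ring
  rw [zygS_UgCphi hφ hφm hg (analyticOn_uD_iff.1 hf.1) hz]
  calc A * ‖deriv f (φ z) * deriv φ z * deriv g z + f (φ z) * deriv (deriv g) z‖
      ≤ A * ‖deriv f (φ z) * deriv φ z * deriv g z‖ + A * ‖f (φ z) * deriv (deriv g) z‖ := by
        rw [← mul_add]; exact mul_le_mul_of_nonneg_left (norm_add_le _ _) hA
    _ ≤ _ := by linarith

lemma boundedOp_UgCphi (hα1 : 1 < α) (hα2 : α < 2) (hφ : DifferentiableOn ℂ φ uD)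
    (hφm : MapsTo φ uD uD) (hg : DifferentiableOn ℂ g uD) {M₁ M₂ : ℝ}
    (hM₁ : ∀ z ∈ uD, (1 - ‖z‖ ^ 2) ^ β * ‖deriv (deriv g) z‖ ≤ M₁)
    (hM₂ : ∀ z ∈ uD,
      (1 - ‖z‖ ^ 2) ^ β * ‖deriv g z * deriv φ z‖ / (1 - ‖φ z‖ ^ 2) ^ (α - 1) ≤ M₂) :
    boundedOp α β (UgCphi g φ) := by
  have hM₁0 : 0 ≤ M₁ := (weight_mul_norm_nonneg zero_mem_uD _).trans (hM₁ 0 zero_mem_uD)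
  have hM₂0 : 0 ≤ M₂ := (div_nonneg (weight_mul_norm_nonneg zero_mem_uD _)
    (Real.rpow_nonneg (one_sub_sq_norm_pos (hφm zero_mem_uD)).le _)).trans (hM₂ 0 zero_mem_uD)
  set c₂ := 1 + α / ((α - 1) * (2 - α))
  set K := 2 * (α / (α - 1)) * M₂ + c₂ * M₁
  have hc₂ : 0 ≤ c₂ :=
    add_nonneg zero_le_one (div_nonneg (by linarith) (mul_nonneg (by linarith) (by linarith)))
  have hK : 0 ≤ K := add_nonneg
    (mul_nonneg (mul_nonneg zero_le_two (div_nonneg (by linarith) (by linarith))) hM₂0)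
    (mul_nonneg hc₂ hM₁0)
  have hzyg := fun f (hf : memZ α f) z (hz : z ∈ uD) =>
    zygS_UgCphi_le hα1 hα2 hφ hφm hg hM₂0 hM₁ hM₂ hf hz
  refine ⟨fun f hf => ⟨?_, K * zNorm α f, hzyg f hf⟩,
    ‖deriv g 0‖ * c₂ + K + 1, by positivity, fun f hf => ?_⟩
  · exact analyticOn_uD_iff.2 fun z hz => (hasDerivAt_UgCphi hφ hφm hg
      (analyticOn_uD_iff.1 hf.1) hz).differentiableAt.differentiableWithinAt
  · have hN : 0 ≤ zNorm α f := hf.zNorm_nonneg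
    have hderiv0 : ‖deriv (UgCphi g φ f) 0‖ ≤ ‖deriv g 0‖ * (c₂ * zNorm α f) := by
      rw [(hasDerivAt_UgCphi hφ hφm hg (analyticOn_uD_iff.1 hf.1) zero_mem_uD).deriv,
        norm_mul, mul_comm]
      gcongr
      exact hf.norm_le hα1 hα2 (hφm zero_mem_uD)
    calc zNorm β (UgCphi g φ f)
        ≤ ‖UgCphi g φ f 0‖ + ‖deriv (UgCphi g φ f) 0‖ + K * zNorm α f :=
          zNorm_le_of_zygS_le (by positivity) (hzyg f hf)
      _ ≤ (‖deriv g 0‖ * c₂ + K + 1) * zNorm α f := by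
          rw [UgCphi_zero, norm_zero]; nlinarith

end Sufficiency

section TestFunction

open ComplexConjugate

variable {α : ℝ} {w z : ℂ}

def testF (α : ℝ) (w : ℂ) (z : ℂ) : ℂ := (1 - conj w * z) ^ ((2 : ℂ) - α)

lemma one_sub_norm_mul_norm_pos (hw : w ∈ uD) (hz : z ∈ uD) : 0 < 1 - ‖w‖ * ‖z‖ := by
  have := mem_uD_iff.1 hw
  have := mem_uD_iff.1 hz
  nlinarith [norm_nonneg w, norm_nonneg z]

lemma norm_conj_mul (w z : ℂ) : ‖conj w * z‖ = ‖w‖ * ‖z‖ := by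
  rw [norm_mul, Complex.norm_conj]

lemma one_sub_norm_mul_norm_le (w z : ℂ) : 1 - ‖w‖ * ‖z‖ ≤ ‖1 - conj w * z‖ := by
  simpa [norm_conj_mul] using norm_sub_norm_le (1 : ℂ) (conj w * z)

lemma one_sub_conj_mul_mem_slitPlane (hw : w ∈ uD) (hz : z ∈ uD) :
    1 - conj w * z ∈ Complex.slitPlane := by
  refine Complex.mem_slitPlane_iff.2 (Or.inl ?_)
  have := (Complex.re_le_norm (conj w * z)).trans_eq (norm_conj_mul w z)
  simp only [Complex.sub_re, Complex.one_re]
  linarith [one_sub_norm_mul_norm_pos hw hz]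

lemma hasDerivAt_one_sub_conj_mul (w z : ℂ) :
    HasDerivAt (fun z => 1 - conj w * z) (-conj w) z := by
  simpa using ((hasDerivAt_id z).const_mul (conj w)).const_sub 1

lemma hasDerivAt_testF (hw : w ∈ uD) (hz : z ∈ uD) :
    HasDerivAt (testF α w) ((2 - α) * (1 - conj w * z) ^ ((1 : ℂ) - α) * -conj w) z := by
  have := (hasDerivAt_one_sub_conj_mul w z).cpow_const (c := (2 : ℂ) - α)
    (one_sub_conj_mul_mem_slitPlane hw hz)
  rwa [show (2 : ℂ) - α - 1 = 1 - α by ring] at this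

lemma deriv_deriv_testF (hw : w ∈ uD) (hz : z ∈ uD) :
    deriv (deriv (testF α w)) z
      = (2 - α) * (1 - α) * conj w ^ 2 * (1 - conj w * z) ^ (-(α : ℂ)) := by
  have hderiv : deriv (testF α w) =ᶠ[𝓝 z]
      fun z => (2 - α) * -conj w * (1 - conj w * z) ^ ((1 : ℂ) - α) :=
    eventually_of_mem (isOpen_uD.mem_nhds hz) fun z hz => by
      rw [(hasDerivAt_testF hw hz).deriv]; ring
  rw [hderiv.deriv_eq, (((hasDerivAt_one_sub_conj_mul w z).cpow_const
    (one_sub_conj_mul_mem_slitPlane hw hz)).const_mul _).deriv,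
    show (1 : ℂ) - α - 1 = -α by ring]
  ring

lemma norm_two_sub_ofReal (hα : α ≤ 2) : ‖(2 : ℂ) - α‖ = 2 - α := by
  rw [show (2 : ℂ) - α = ((2 - α : ℝ) : ℂ) by push_cast; ring, Complex.norm_real,
    Real.norm_of_nonneg (by linarith)]

lemma zygS_testF_le (hα1 : 1 < α) (hα2 : α < 2) (hw : w ∈ uD) (hz : z ∈ uD) :
    zygS α (testF α w) z ≤ 2 ^ α := by
  set u := 1 - conj w * z
  have hu : 0 < ‖u‖ := (one_sub_norm_mul_norm_pos hw hz).trans_le (one_sub_norm_mul_norm_le w z)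
  have hcoef : ‖(2 - α) * (1 - α) * conj w ^ 2‖ ≤ 1 := by
    rw [norm_mul, norm_mul, norm_two_sub_ofReal hα2.le, norm_pow, Complex.norm_conj,
      show (1 : ℂ) - α = ((1 - α : ℝ) : ℂ) by push_cast; ring, Complex.norm_real,
      Real.norm_of_nonpos (by linarith)]
    have hw1 : ‖w‖ ^ 2 ≤ 1 := by nlinarith [mem_uD_iff.1 hw, norm_nonneg w]
    have hc : (2 - α) * -(1 - α) ≤ 1 := by nlinarith
    nlinarith [mul_le_mul hc hw1 (sq_nonneg _) zero_le_one]
  have hweight : (1 - ‖z‖ ^ 2) ^ α * ‖u ^ (-(α : ℂ))‖ ≤ 2 ^ α := by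
    have hle : 1 - ‖z‖ ^ 2 ≤ 2 * ‖u‖ := by
      nlinarith [one_sub_norm_mul_norm_le w z, mem_uD_iff.1 hw, mem_uD_iff.1 hz,
        norm_nonneg w, norm_nonneg z]
    rw [show -(α : ℂ) = ((-α : ℝ) : ℂ) by push_cast; ring, Complex.norm_cpow_real,
      Real.rpow_neg hu.le, ← div_eq_mul_inv, div_le_iff₀ (Real.rpow_pos_of_pos hu α),
      ← Real.mul_rpow zero_le_two hu.le]
    exact Real.rpow_le_rpow (one_sub_sq_norm_pos hz).le hle (by linarith)
  rw [zygS, deriv_deriv_testF hw hz, norm_mul]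
  calc (1 - ‖z‖ ^ 2) ^ α * (‖(2 - α) * (1 - α) * conj w ^ 2‖ * ‖u ^ (-(α : ℂ))‖)
      = ‖(2 - α) * (1 - α) * conj w ^ 2‖ * ((1 - ‖z‖ ^ 2) ^ α * ‖u ^ (-(α : ℂ))‖) := by ring
    _ ≤ 1 * 2 ^ α := mul_le_mul hcoef hweight (weight_mul_norm_nonneg hz _) zero_le_one
    _ = 2 ^ α := one_mul _

lemma memZ_testF (hα1 : 1 < α) (hα2 : α < 2) (hw : w ∈ uD) : memZ α (testF α w) :=
  ⟨analyticOn_uD_iff.2 fun _ hz => (hasDerivAt_testF hw hz).differentiableAt.differentiableWithinAt,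
    2 ^ α, fun _ hz => zygS_testF_le hα1 hα2 hw hz⟩

lemma zNorm_testF_le (hα1 : 1 < α) (hα2 : α < 2) (hw : w ∈ uD) :
    zNorm α (testF α w) ≤ 2 + 2 ^ α := by
  have hderiv0 : ‖deriv (testF α w) 0‖ ≤ 1 := by
    rw [(hasDerivAt_testF hw zero_mem_uD).deriv, mul_zero, sub_zero, Complex.one_cpow, mul_one,
      norm_mul, norm_neg, Complex.norm_conj, norm_two_sub_ofReal hα2.le]
    nlinarith [mem_uD_iff.1 hw, norm_nonneg w]
  have := zNorm_le_of_zygS_le (by positivity) fun _ hz => zygS_testF_le hα1 hα2 hw hz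
  simp only [testF, mul_zero, sub_zero, Complex.one_cpow, norm_one] at this
  linarith

lemma one_sub_conj_mul_self (w : ℂ) : 1 - conj w * w = ((1 - ‖w‖ ^ 2 : ℝ) : ℂ) := by
  rw [Complex.conj_mul']; push_cast; rfl

lemma norm_testF_self_le (hα2 : α ≤ 2) (hw : w ∈ uD) : ‖testF α w w‖ ≤ 1 := by
  rw [testF, one_sub_conj_mul_self, show (2 : ℂ) - α = ((2 - α : ℝ) : ℂ) by push_cast; ring,
    Complex.norm_cpow_real, Complex.norm_real, Real.norm_of_nonneg (one_sub_sq_norm_pos hw).le]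
  exact Real.rpow_le_one (one_sub_sq_norm_pos hw).le (by nlinarith [norm_nonneg w])
    (by linarith)

lemma norm_deriv_testF_self (hα2 : α ≤ 2) (hw : w ∈ uD) :
    ‖deriv (testF α w) w‖ = (2 - α) * (1 - ‖w‖ ^ 2) ^ (1 - α) * ‖w‖ := by
  rw [(hasDerivAt_testF hw hw).deriv, one_sub_conj_mul_self,
    show (1 : ℂ) - α = ((1 - α : ℝ) : ℂ) by push_cast; ring, norm_mul, norm_mul,
    norm_two_sub_ofReal hα2, Complex.norm_cpow_real, Complex.norm_real,
    Real.norm_of_nonneg (one_sub_sq_norm_pos hw).le, norm_neg, Complex.norm_conj]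

end TestFunction

lemma boundedOp.zygS_le {a b : ℝ} {T : (ℂ → ℂ) → ℂ → ℂ} (hT : boundedOp a b T) :
    ∃ C > 0, ∀ f, memZ a f → ∀ z ∈ uD, zygS b (T f) z ≤ C * zNorm a f := by
  obtain ⟨hmem, C, hC, hbound⟩ := hT
  exact ⟨C, hC, fun f hf z hz => ((hmem f hf).zygS_le_zNorm hz).trans (hbound f hf)⟩

lemma mul_norm_le_of_mul_norm_add_le {E : Type*} [SeminormedAddCommGroup E] {c P Q : ℝ}
    {x y : E} (hc : 0 ≤ c) (hxy : c * ‖x + y‖ ≤ P) (hy : c * ‖y‖ ≤ Q) : c * ‖x‖ ≤ P + Q :=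
  calc c * ‖x‖ ≤ c * ‖x + y‖ + c * ‖y‖ := by
        rw [← mul_add]; gcongr; simpa using norm_sub_le (x + y) y
    _ ≤ P + Q := add_le_add hxy hy

section Necessity

variable {a : ℝ}

lemma memZ_const_one : memZ a fun _ => 1 :=
  ⟨analyticOn_const, 0, fun z _ => by simp [zygS]⟩

lemma zNorm_const_one_le : zNorm a (fun _ => 1) ≤ 1 := by
  simpa using zNorm_le_of_zygS_le (a := a) (f := fun _ => 1) le_rfl fun z _ => by simp [zygS]

lemma memZ_id : memZ a id :=
  ⟨analyticOn_id, 0, fun z _ => by simp [zygS]⟩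

lemma zNorm_id_le : zNorm a id ≤ 1 := by
  simpa using zNorm_le_of_zygS_le (a := a) (f := id) le_rfl fun z _ => by simp [zygS]

variable {α β C : ℝ} {φ g : ℂ → ℂ} (hφ : DifferentiableOn ℂ φ uD) (hφm : MapsTo φ uD uD)
  (hg : DifferentiableOn ℂ g uD) (hC0 : 0 ≤ C)
  (hC : ∀ f, memZ α f → ∀ z ∈ uD, zygS β (UgCphi g φ f) z ≤ C * zNorm α f)
include hφ hφm hg hC0 hC

lemma weight_mul_norm_deriv_deriv_le {z : ℂ} (hz : z ∈ uD) :
    (1 - ‖z‖ ^ 2) ^ β * ‖deriv (deriv g) z‖ ≤ C := by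
  have h := hC _ memZ_const_one z hz
  rw [zygS_UgCphi hφ hφm hg (differentiableOn_const 1) hz] at h
  simpa using h.trans (mul_le_of_le_one_right hC0 zNorm_const_one_le)

lemma weight_mul_norm_comp_mul_deriv_deriv_le {f : ℂ → ℂ} {z : ℂ} (hz : z ∈ uD)
    (hf : ‖f (φ z)‖ ≤ 1) : (1 - ‖z‖ ^ 2) ^ β * ‖f (φ z) * deriv (deriv g) z‖ ≤ C := by
  rw [norm_mul, mul_left_comm]
  exact mul_le_of_le_one_left (weight_mul_norm_nonneg hz _) hf |>.trans
    (weight_mul_norm_deriv_deriv_le hφ hφm hg hC0 hC hz)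

lemma weight_mul_norm_deriv_mul_deriv_le {z : ℂ} (hz : z ∈ uD) :
    (1 - ‖z‖ ^ 2) ^ β * ‖deriv g z * deriv φ z‖ ≤ 2 * C := by
  have h := hC _ memZ_id z hz
  rw [zygS_UgCphi hφ hφm hg differentiableOn_id hz, deriv_id, one_mul] at h
  rw [two_mul, mul_comm (deriv g z)]
  exact mul_norm_le_of_mul_norm_add_le (weight_nonneg hz)
    (h.trans (mul_le_of_le_one_right hC0 zNorm_id_le))
    (weight_mul_norm_comp_mul_deriv_deriv_le hφ hφm hg hC0 hC hz (mem_uD_iff.1 (hφm hz)).le)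

lemma weight_mul_norm_deriv_mul_deriv_le_testF (hα1 : 1 < α) (hα2 : α < 2) {z : ℂ}
    (hz : z ∈ uD) :
    (2 - α) * ‖φ z‖ * ((1 - ‖φ z‖ ^ 2) ^ (1 - α)
      * ((1 - ‖z‖ ^ 2) ^ β * ‖deriv g z * deriv φ z‖)) ≤ C * (3 + 2 ^ α) := by
  have hw := hφm hz
  have hf := memZ_testF hα1 hα2 hw
  have h := hC _ hf z hz
  rw [zygS_UgCphi hφ hφm hg (analyticOn_uD_iff.1 hf.1) hz] at h
  have hmain := mul_norm_le_of_mul_norm_add_le (weight_nonneg hz)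
    (h.trans (mul_le_mul_of_nonneg_left (zNorm_testF_le hα1 hα2 hw) hC0))
    (weight_mul_norm_comp_mul_deriv_deriv_le hφ hφm hg hC0 hC hz (norm_testF_self_le hα2.le hw))
  rw [norm_mul, norm_mul, norm_deriv_testF_self hα2.le hw] at hmain
  rw [norm_mul]
  linarith

lemma exists_weighted_bound_of_zygS_UgCphi_le (hα1 : 1 < α) (hα2 : α < 2) :
    ∃ M : ℝ, ∀ z ∈ uD,
      (1 - ‖z‖ ^ 2) ^ β * ‖deriv g z * deriv φ z‖ / (1 - ‖φ z‖ ^ 2) ^ (α - 1) ≤ M := by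
  refine ⟨3 * C + 2 * C * (3 + 2 ^ α) / (2 - α), fun z hz => ?_⟩
  set X := (1 - ‖z‖ ^ 2) ^ β * ‖deriv g z * deriv φ z‖
  set ρ := ‖φ z‖
  have hq : 0 < 1 - ρ ^ 2 := one_sub_sq_norm_pos (hφm hz)
  have hX : 0 ≤ X := weight_mul_norm_nonneg hz _
  have hα2' : 0 < 2 - α := by linarith
  have hlarge_bound : 0 ≤ 2 * C * (3 + 2 ^ α) / (2 - α) := by positivity
  rw [div_eq_mul_inv, ← Real.rpow_neg hq.le, neg_sub, mul_comm]
  rcases le_or_gt ρ (1 / 2) with hsmall | hlarge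
  · have hpow : (1 - ρ ^ 2) ^ (1 - α) ≤ 4 / 3 :=
      calc (1 - ρ ^ 2) ^ (1 - α) ≤ (1 - ρ ^ 2) ^ (-1 : ℝ) :=
            Real.rpow_le_rpow_of_exponent_ge hq (by nlinarith) (by linarith)
        _ = (1 - ρ ^ 2)⁻¹ := Real.rpow_neg_one _
        _ ≤ 4 / 3 := by rw [inv_le_comm₀ hq (by norm_num)]; nlinarith [norm_nonneg (φ z)]
    have hX2C := weight_mul_norm_deriv_mul_deriv_le hφ hφm hg hC0 hC hz
    nlinarith
  · have htest : (2 - α) * ρ * ((1 - ρ ^ 2) ^ (1 - α) * X) ≤ C * (3 + 2 ^ α) :=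
      weight_mul_norm_deriv_mul_deriv_le_testF hφ hφm hg hC0 hC hα1 hα2 hz
    have hY : 0 ≤ (2 - α) * ((1 - ρ ^ 2) ^ (1 - α) * X) :=
      mul_nonneg hα2'.le (mul_nonneg (Real.rpow_nonneg hq.le _) hX)
    have : (1 - ρ ^ 2) ^ (1 - α) * X ≤ 2 * C * (3 + 2 ^ α) / (2 - α) := by
      rw [le_div_iff₀ hα2']
      nlinarith [mul_le_mul_of_nonneg_right hlarge.le hY]
    linarith

end Necessity

theorem stmt_13_general (α β : ℝ) (hα1 : 1 < α) (hα2 : α < 2)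
    (φ g : ℂ → ℂ) (hφ : AnalyticOn ℂ φ uD) (hφm : Set.MapsTo φ uD uD)
    (hg : AnalyticOn ℂ g uD) :
    boundedOp α β (UgCphi g φ) ↔
      (memHv β (deriv (deriv g)) ∧ (∃ M : ℝ, ∀ z ∈ uD, (1 - ‖z‖ ^ 2) ^ β * ‖deriv g z * deriv φ z‖ / (1 - ‖φ z‖ ^ 2) ^ (α - 1) ≤ M)) := by
  rw [analyticOn_uD_iff] at hφ hg
  constructor
  · intro hT
    obtain ⟨C, hC0, hC⟩ := hT.zygS_le
    exact ⟨⟨C, fun z hz => weight_mul_norm_deriv_deriv_le hφ hφm hg hC0.le hC hz⟩,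
      exists_weighted_bound_of_zygS_UgCphi_le hφ hφm hg hC0.le hC hα1 hα2⟩
  · rintro ⟨⟨M₁, hM₁⟩, M₂, hM₂⟩
    exact boundedOp_UgCphi hα1 hα2 hφ hφm hg hM₁ hM₂

theorem stmt_13 (α β : ℝ) (hα1 : 1 < α) (hα2 : α < 2) (hβ : 0 < β)
    (φ g : ℂ → ℂ) (hφ : AnalyticOn ℂ φ uD) (hφm : Set.MapsTo φ uD uD)
    (hg : AnalyticOn ℂ g uD) :
    boundedOp α β (UgCphi g φ) ↔
      (memHv β (deriv (deriv g)) ∧ (∃ M : ℝ, ∀ z ∈ uD, (1 - ‖z‖ ^ 2) ^ β * ‖deriv g z * deriv φ z‖ / (1 - ‖φ z‖ ^ 2) ^ (α - 1) ≤ M)) :=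
  stmt_13_general α β hα1 hα2 φ g hφ hφm hg
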